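/- Let $V'$ be a real normed space and let $(f_t)_{t\ge 0}$ be a family of convex Fréchet differentiable functions $f_t:V'\to\mathbb{R}$ converging pointwise as $t\to\infty$ to a function $f_\infty:V'\to\mathbb{R}$. Suppose the derivatives satisfy $\sup_{t\ge 0}[f_t']_{Lip}\le L<\infty$ (uniform Lipschitz constant of $x\mapsto f_t'(x)$) and $\sup_{t\ge 0}\|f_t'(0)\|\le M<\infty$. Then $f_\infty$ is convex and Fréchet differentiable, its derivative $f_\infty'$ is Lipschitz with constant $L$, and for every $x,y\in V'$ one has $\langle f_t'(x),y\rangle\to\langle f_\infty'(x),y\rangle$ as $t\to\infty$. -/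

import Mathlib

/-!
Convexity and the Lipschitz bound on the derivatives trap the remainder
`f t (x + v) - f t x - f' t x v` in `[0, L ‖v‖²]`, uniformly in `t`. Hence `f' t x v` lies within
`L ‖v‖² h` of the difference quotient `(f t (x + h • v) - f t x) / h`, which converges as
`t → ∞`, so `f' t x v` is Cauchy. Since the `f' t x` are uniformly bounded, the limits form a
continuous linear map `g x`; the remainder bounds pass to the limit and make `g x` the derivative
of `finf`, and the Lipschitz bound passes to the limit as well.
-/

open Filter Topology Set

section

variable {E : Type*} [NormedAddCommGroup E] [NormedSpace ℝ E]

theorem ConvexOn.fderiv_apply_le_sub {f : E → ℝ} {f' : E →L[ℝ] ℝ} {x : E}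
    (hf : ConvexOn ℝ univ f) (hd : HasFDerivAt f f' x) (y : E) : f' y ≤ f (x + y) - f x := by
  have hline : ConvexOn ℝ univ fun t : ℝ => f (x + t • y) := by
    have hcomp := hf.comp_affineMap (AffineMap.lineMap x (x + y))
    have hfun : f ∘ AffineMap.lineMap x (x + y) = fun t : ℝ => f (x + t • y) := by
      ext t
      simp [AffineMap.lineMap_apply_module', add_comm]
    rwa [hfun, preimage_univ] at hcomp
  simpa [slope_def_field] using
    hline.le_slope_of_hasDerivAt (mem_univ 0) (mem_univ 1) one_pos (hd.hasLineDerivAt y)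

theorem ConvexOn.sub_sub_fderiv_apply_le {f : E → ℝ} {f' : E → E →L[ℝ] ℝ} {L : ℝ}
    (hf : ConvexOn ℝ univ f) (hd : ∀ x, HasFDerivAt f (f' x) x)
    (hlip : ∀ x y, ‖f' x - f' y‖ ≤ L * ‖x - y‖) (x v : E) :
    f (x + v) - f x - f' x v ≤ L * ‖v‖ ^ 2 := by
  have hback : f x - f (x + v) ≥ -f' (x + v) v := by
    simpa using hf.fderiv_apply_le_sub (hd (x + v)) (-v)
  have hdiff : f' (x + v) v - f' x v ≤ L * ‖v‖ ^ 2 :=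
    calc f' (x + v) v - f' x v ≤ ‖(f' (x + v) - f' x) v‖ := le_abs_self _
      _ ≤ ‖f' (x + v) - f' x‖ * ‖v‖ := (f' (x + v) - f' x).le_opNorm v
      _ ≤ L * ‖v‖ * ‖v‖ := by
        gcongr
        simpa using hlip (x + v) x
      _ = L * ‖v‖ ^ 2 := by ring
  linarith

theorem abs_apply_sub_div_le_of_sub_sub_le {f : E → ℝ} {A : E →L[ℝ] ℝ} {x v : E} {K h : ℝ}
    (hh : 0 < h) (hlo : 0 ≤ f (x + h • v) - f x - A (h • v))
    (hup : f (x + h • v) - f x - A (h • v) ≤ K * h ^ 2) :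
    |A v - (f (x + h • v) - f x) / h| ≤ K * h := by
  have hdiv : (f (x + h • v) - f x) / h - A v = (f (x + h • v) - f x - A (h • v)) / h := by
    rw [map_smul, smul_eq_mul]
    field_simp
  rw [abs_sub_comm, hdiv, abs_of_nonneg (div_nonneg hlo hh.le), div_le_iff₀ hh]
  linarith

theorem hasFDerivAt_of_abs_sub_sub_le_sq {f : E → ℝ} {A : E →L[ℝ] ℝ} {x : E} {C : ℝ}
    (h : ∀ v, |f (x + v) - f x - A v| ≤ C * ‖v‖ ^ 2) : HasFDerivAt f A x := by
  rw [hasFDerivAt_iff_isLittleO_nhds_zero]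
  refine Asymptotics.IsBigO.trans_isLittleO ?_ (Asymptotics.isLittleO_norm_pow_id one_lt_two)
  refine Asymptotics.IsBigO.of_bound C (Eventually.of_forall fun v => ?_)
  simpa using h v

theorem ConvexOn.of_tendsto {ι F : Type*} [AddCommMonoid F] [Module ℝ F] {l : Filter ι} [l.NeBot]
    {s : Set F} {f : ι → F → ℝ} {g : F → ℝ} (hf : ∀ᶠ i in l, ConvexOn ℝ s (f i))
    (hs : Convex ℝ s) (hg : ∀ x ∈ s, Tendsto (fun i => f i x) l (𝓝 (g x))) :
    ConvexOn ℝ s g := by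
  refine ⟨hs, fun x hx y hy a b ha hb hab => ?_⟩
  refine le_of_tendsto_of_tendsto (hg _ (hs hx hy ha hb hab))
    (((hg x hx).const_smul a).add ((hg y hy).const_smul b)) ?_
  filter_upwards [hf] with i hi
  exact hi.2 hx hy ha hb hab

theorem cauchySeq_of_forall_eventually_dist_le {ι α : Type*} [SemilatticeSup ι] [Nonempty ι]
    [PseudoMetricSpace α] {u : ι → α}
    (h : ∀ ε > 0, ∃ q : ι → α, CauchySeq q ∧ ∀ᶠ i in atTop, dist (u i) (q i) ≤ ε) :
    CauchySeq u := by
  refine Metric.cauchySeq_iff.2 fun ε hε => ?_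
  obtain ⟨q, hq, hclose⟩ := h (ε / 3) (by positivity)
  obtain ⟨N₁, hN₁⟩ := eventually_atTop.1 hclose
  obtain ⟨N₂, hN₂⟩ := Metric.cauchySeq_iff.1 hq (ε / 3) (by positivity)
  refine ⟨N₁ ⊔ N₂, fun m (hm : N₁ ⊔ N₂ ≤ m) n (hn : N₁ ⊔ N₂ ≤ n) => ?_⟩
  rw [sup_le_iff] at hm hn
  have hum := hN₁ m hm.1
  have hun := hN₁ n hn.1
  have hqmn := hN₂ m hm.2 n hn.2
  have hnu := dist_comm (u n) (q n)
  linarith [dist_triangle4 (u m) (q m) (q n) (u n)]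

theorem cauchySeq_apply_of_sub_sub_le {ι : Type*} [SemilatticeSup ι] [Nonempty ι]
    {F : ι → E → ℝ} {Φ : E → ℝ} {A : ι → E →L[ℝ] ℝ} {x : E} {C : ℝ}
    (hF : ∀ y, Tendsto (fun i => F i y) atTop (𝓝 (Φ y)))
    (hbd : ∀ᶠ i in atTop, ∀ v, F i (x + v) - F i x - A i v ∈ Icc 0 (C * ‖v‖ ^ 2))
    (v : E) : CauchySeq fun i => A i v := by
  refine cauchySeq_of_forall_eventually_dist_le fun ε hε => ?_
  set K := C * ‖v‖ ^ 2
  obtain ⟨h, hh, hKh⟩ : ∃ h > 0, K * h ≤ ε := by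
    refine ⟨ε / (|K| + 1), by positivity, ?_⟩
    rw [mul_div_assoc', div_le_iff₀ (by positivity)]
    nlinarith [le_abs_self K]
  refine ⟨fun i => (F i (x + h • v) - F i x) / h,
    (((hF _).sub (hF x)).div_const h).cauchySeq, ?_⟩
  filter_upwards [hbd] with i hi
  obtain ⟨hlo, hup⟩ := hi (h • v)
  rw [norm_smul, Real.norm_of_nonneg hh.le] at hup
  calc dist (A i v) ((F i (x + h • v) - F i x) / h) ≤ K * h :=
        abs_apply_sub_div_le_of_sub_sub_le hh hlo (by linarith)
    _ ≤ ε := hKh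

end

namespace ContinuousLinearMap

variable {𝕜 E F ι : Type*} [NontriviallyNormedField 𝕜] [NormedAddCommGroup E] [NormedSpace 𝕜 E]
  [NormedAddCommGroup F] [NormedSpace 𝕜 F] {l : Filter ι} [l.NeBot] {A : ι → E →L[𝕜] F} {R : ℝ}

theorem exists_forall_tendsto_apply (hA : ∀ᶠ i in l, ‖A i‖ ≤ R)
    (hlim : ∀ v, ∃ w, Tendsto (fun i => A i v) l (𝓝 w)) :
    ∃ B : E →L[𝕜] F, ∀ v, Tendsto (fun i => A i v) l (𝓝 (B v)) := by
  choose φ hφ using hlim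
  refine ⟨ofMemClosureImageCoeBounded φ (Metric.isBounded_closedBall (x := 0) (r := R))
    (mem_closure_of_tendsto (tendsto_pi_nhds.2 hφ) ?_), hφ⟩
  filter_upwards [hA] with i hi
  exact mem_image_of_mem _ (mem_closedBall_zero_iff.2 hi)

theorem opNorm_le_of_tendsto_apply {B : E →L[𝕜] F} (hA : ∀ᶠ i in l, ‖A i‖ ≤ R)
    (hB : ∀ v, Tendsto (fun i => A i v) l (𝓝 (B v))) : ‖B‖ ≤ R := by
  obtain ⟨i, hi⟩ := hA.exists
  refine opNorm_le_bound _ ((norm_nonneg _).trans hi) fun v => ?_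
  exact le_of_tendsto (hB v).norm (hA.mono fun i hi => (A i).le_of_opNorm_le hi v)

end ContinuousLinearMap

theorem stmt_9_general {V' : Type*} [NormedAddCommGroup V'] [NormedSpace ℝ V']
    (f : ℝ → V' → ℝ) (f' : ℝ → V' → (V' →L[ℝ] ℝ)) (finf : V' → ℝ) (L M : ℝ)
    (hconv : ∀ t ≥ (0 : ℝ), ConvexOn ℝ Set.univ (f t))
    (hdiff : ∀ t ≥ (0 : ℝ), ∀ x : V', HasFDerivAt (f t) (f' t x) x)
    (hptwise : ∀ x : V', Tendsto (fun t => f t x) atTop (nhds (finf x)))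
    (hlip : ∀ t ≥ (0 : ℝ), ∀ x y : V', ‖f' t x - f' t y‖ ≤ L * ‖x - y‖)
    (hbound : ∀ t ≥ (0 : ℝ), ‖f' t 0‖ ≤ M) :
    ConvexOn ℝ Set.univ finf ∧
    ∃ g : V' → (V' →L[ℝ] ℝ),
      (∀ x : V', HasFDerivAt finf (g x) x) ∧
      (∀ x y : V', ‖g x - g y‖ ≤ L * ‖x - y‖) ∧
      (∀ x y : V', Tendsto (fun t => f' t x y) atTop (nhds (g x y))) := by
  have hpos : ∀ᶠ t in atTop, (0 : ℝ) ≤ t := eventually_ge_atTop 0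
  have hbregman : ∀ᶠ t in atTop, ∀ x v,
      f t (x + v) - f t x - f' t x v ∈ Icc 0 (L * ‖v‖ ^ 2) := by
    filter_upwards [hpos] with t ht x v
    exact ⟨sub_nonneg.2 ((hconv t ht).fderiv_apply_le_sub (hdiff t ht x) v),
      (hconv t ht).sub_sub_fderiv_apply_le (hdiff t ht) (hlip t ht) x v⟩
  have hnorm : ∀ x, ∀ᶠ t in atTop, ‖f' t x‖ ≤ M + L * ‖x‖ := fun x => by
    filter_upwards [hpos] with t ht
    calc ‖f' t x‖ ≤ ‖f' t 0‖ + ‖f' t x - f' t 0‖ := norm_le_insert' _ _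
      _ ≤ M + L * ‖x‖ := by simpa using add_le_add (hbound t ht) (hlip t ht x 0)
  choose g hg using fun x => ContinuousLinearMap.exists_forall_tendsto_apply (hnorm x)
    fun v => cauchySeq_tendsto_of_complete
      (cauchySeq_apply_of_sub_sub_le hptwise (hbregman.mono fun t ht => ht x) v)
  have hbregman_lim : ∀ x v, finf (x + v) - finf x - g x v ∈ Icc 0 (L * ‖v‖ ^ 2) :=
    fun x v => isClosed_Icc.mem_of_tendsto (((hptwise _).sub (hptwise x)).sub (hg x v))
      (hbregman.mono fun t ht => ht x v)
  refine ⟨ConvexOn.of_tendsto (hpos.mono hconv) convex_univ fun x _ => hptwise x, g,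
    fun x => hasFDerivAt_of_abs_sub_sub_le_sq (C := L) fun v => ?_, fun x y => ?_, hg⟩
  · exact (abs_of_nonneg (hbregman_lim x v).1).trans_le (hbregman_lim x v).2
  · exact ContinuousLinearMap.opNorm_le_of_tendsto_apply (hpos.mono fun t ht => hlip t ht x y)
      fun v => (hg x v).sub (hg y v)

theorem stmt_9 {V' : Type*} [NormedAddCommGroup V'] [NormedSpace ℝ V']
    (f : ℝ → V' → ℝ) (f' : ℝ → V' → (V' →L[ℝ] ℝ)) (finf : V' → ℝ) (L M : ℝ)
    (hL : 0 ≤ L) (hM : 0 ≤ M)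
    (hconv : ∀ t ≥ (0 : ℝ), ConvexOn ℝ Set.univ (f t))
    (hdiff : ∀ t ≥ (0 : ℝ), ∀ x : V', HasFDerivAt (f t) (f' t x) x)
    (hptwise : ∀ x : V', Tendsto (fun t => f t x) atTop (nhds (finf x)))
    (hlip : ∀ t ≥ (0 : ℝ), ∀ x y : V', ‖f' t x - f' t y‖ ≤ L * ‖x - y‖)
    (hbound : ∀ t ≥ (0 : ℝ), ‖f' t 0‖ ≤ M) :
    ConvexOn ℝ Set.univ finf ∧
    ∃ g : V' → (V' →L[ℝ] ℝ),
      (∀ x : V', HasFDerivAt finf (g x) x) ∧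
      (∀ x y : V', ‖g x - g y‖ ≤ L * ‖x - y‖) ∧
      (∀ x y : V', Tendsto (fun t => f' t x y) atTop (nhds (g x y))) :=
  stmt_9_general f f' finf L M hconv hdiff hptwise hlip hbound
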